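/- arXiv:math/0511724 — 2 statements merged into one kernel-verified Lean document; each statement's English description precedes it below -/
import Mathlib

section
/- Let E > 0, ν > 0, h > 0, τ > 0 and set K(τ) = 1 + 3ν²τ²/E³. Suppose a sequence of functions wₙ on (0, ∞) satisfies w₀ ≡ 1 and the bounds |w_{2k+1}(τ)| ≤ (K(τ)/2) ∫₀^τ e^{2ν̃(r-τ)} (1+r²)^{-1} |w_{2k}(r)| dr and |w_{2k+2}(τ)| ≤ (K(τ)/2) ∫₀^τ (1+r²)^{-1} |w_{2k+1}(r)| dr for all k ≥ 0, where ν̃ ≥ 1/2. Then for all n ≥ 0, |wₙ(τ)| ≤ (K(τ)ⁿ/n!)·(τ/(1+τ))ⁿ. -/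
/-!
Induction on `n`. Since `K` is nondecreasing, the bound for `wₙ` on `(0, τ]` holds with the
constant `K τ`, and `e^{2ν̃(r-τ)} ≤ 1` removes the exponential weight. With
`(1 + r²)⁻¹ ≤ 2 / (1 + r)²` both recursions reduce to the exact primitive
`d/dr [(r/(1+r))^{n+1} / (n+1)] = (r/(1+r))ⁿ / (1+r)²`.
-/

open MeasureTheory Set Nat

lemma hasDerivAt_div_one_add_pow_succ (n : ℕ) {x : ℝ} (hx : 1 + x ≠ 0) :
    HasDerivAt (fun x : ℝ => (x / (1 + x)) ^ (n + 1) / (n + 1))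
      ((x / (1 + x)) ^ n / (1 + x) ^ 2) x := by
  have hq : HasDerivAt (fun x : ℝ => x / (1 + x)) ((1 * (1 + x) - x * (0 + 1)) / (1 + x) ^ 2) x :=
    (hasDerivAt_id x).div ((hasDerivAt_const x 1).add (hasDerivAt_id x)) hx
  refine ((hq.fun_pow (n + 1)).div_const ((n : ℝ) + 1)).congr_deriv ?_
  push_cast
  field_simp
  ring

lemma integral_div_one_add_pow_div_sq (n : ℕ) {τ : ℝ} (hτ : 0 ≤ τ) :
    ∫ r in (0 : ℝ)..τ, (r / (1 + r)) ^ n / (1 + r) ^ 2 = (τ / (1 + τ)) ^ (n + 1) / (n + 1) := by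
  have hpos : ∀ r ∈ uIcc 0 τ, 1 + r ≠ 0 := fun r hr => by
    rw [uIcc_of_le hτ] at hr
    linarith [hr.1]
  have hcont : ContinuousOn (fun r : ℝ => (r / (1 + r)) ^ n / (1 + r) ^ 2) (uIcc 0 τ) :=
    ((continuousOn_id.div (by fun_prop) hpos).pow n).div (by fun_prop)
      fun r hr => pow_ne_zero 2 (hpos r hr)
  rw [intervalIntegral.integral_eq_sub_of_hasDerivAt
    (fun r hr => hasDerivAt_div_one_add_pow_succ n (hpos r hr)) hcont.intervalIntegrable]
  simp

lemma inv_one_add_sq_le_two_div_sq {r : ℝ} (hr : 1 + r ≠ 0) :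
    (1 + r ^ 2)⁻¹ ≤ 2 / (1 + r) ^ 2 := by
  rw [inv_eq_one_div, div_le_div_iff₀ (by positivity) (by positivity)]
  nlinarith [sq_nonneg (1 - r)]

/-- Unlike `intervalIntegral.integral_mono_on_of_le_Ioo`, `f` need not be integrable: otherwise
its integral is `0`. -/
lemma intervalIntegral.integral_mono_on_of_le_Ioo_of_nonneg {f g : ℝ → ℝ} {a b : ℝ} (hab : a ≤ b)
    (hg : IntervalIntegrable g volume a b) (hg0 : ∀ x ∈ Icc a b, 0 ≤ g x)
    (hfg : ∀ x ∈ Ioo a b, f x ≤ g x) :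
    ∫ x in a..b, f x ≤ ∫ x in a..b, g x := by
  by_cases hf : IntervalIntegrable f volume a b
  · exact intervalIntegral.integral_mono_on_of_le_Ioo hab hf hg hfg
  · rw [intervalIntegral.integral_undef hf]
    exact intervalIntegral.integral_nonneg hab hg0

lemma integral_le_of_le_inv_one_add_sq_mul_pow {f : ℝ → ℝ} {C τ : ℝ} (n : ℕ) (hC : 0 ≤ C)
    (hτ : 0 ≤ τ) (hf : ∀ r ∈ Ioo 0 τ, f r ≤ (1 + r ^ 2)⁻¹ * (C * (r / (1 + r)) ^ n)) :
    ∫ r in (0 : ℝ)..τ, f r ≤ 2 * C * ((τ / (1 + τ)) ^ (n + 1) / (n + 1)) := by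
  set g : ℝ → ℝ := fun r => 2 * C * ((r / (1 + r)) ^ n / (1 + r) ^ 2)
  have hg0 : ∀ r ∈ Icc 0 τ, 0 ≤ g r := fun r hr => by
    have := hr.1
    positivity
  have hg : IntervalIntegrable g volume 0 τ := by
    refine (continuousOn_const.mul (((continuousOn_id.div (by fun_prop) ?_).pow n).div
      (by fun_prop) ?_)).intervalIntegrable <;>
    · intro r hr
      rw [uIcc_of_le hτ] at hr
      have := hr.1
      positivity
  have hfg : ∀ r ∈ Ioo 0 τ, f r ≤ g r := fun r hr => by
    have h1r : 1 + r ≠ 0 := by linarith [hr.1]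
    calc f r ≤ (1 + r ^ 2)⁻¹ * (C * (r / (1 + r)) ^ n) := hf r hr
      _ ≤ 2 / (1 + r) ^ 2 * (C * (r / (1 + r)) ^ n) := by
        gcongr
        · have := hr.1
          positivity
        · exact inv_one_add_sq_le_two_div_sq h1r
      _ = g r := by ring
  calc ∫ r in (0 : ℝ)..τ, f r ≤ ∫ r in (0 : ℝ)..τ, g r :=
        intervalIntegral.integral_mono_on_of_le_Ioo_of_nonneg hτ hg hg0 hfg
    _ = 2 * C * ((τ / (1 + τ)) ^ (n + 1) / (n + 1)) := by
        rw [intervalIntegral.integral_const_mul, integral_div_one_add_pow_div_sq n hτ]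

lemma le_pow_div_factorial_succ {f : ℝ → ℝ} {c τ v : ℝ} (n : ℕ) (hc : 0 ≤ c) (hτ : 0 ≤ τ)
    (hf : ∀ r ∈ Ioo 0 τ, f r ≤ (1 + r ^ 2)⁻¹ * (c ^ n / n ! * (r / (1 + r)) ^ n))
    (hv : v ≤ c / 2 * ∫ r in (0 : ℝ)..τ, f r) :
    v ≤ c ^ (n + 1) / (n + 1)! * (τ / (1 + τ)) ^ (n + 1) := by
  calc v ≤ c / 2 * (2 * (c ^ n / n !) * ((τ / (1 + τ)) ^ (n + 1) / (n + 1))) := by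
        refine hv.trans (mul_le_mul_of_nonneg_left ?_ (by positivity))
        exact integral_le_of_le_inv_one_add_sq_mul_pow n (by positivity) hτ hf
    _ = c ^ (n + 1) / (n + 1)! * (τ / (1 + τ)) ^ (n + 1) := by
        rw [factorial_succ]
        push_cast
        field_simp
        ring

theorem stmt7_general (E ν νt : ℝ) (hE : 0 < E) (hνt : 1/2 ≤ νt)
    (K : ℝ → ℝ) (hK : ∀ τ, K τ = 1 + 3*ν^2*τ^2/E^3)
    (w : ℕ → ℝ → ℝ)
    (hw0 : ∀ τ : ℝ, w 0 τ = 1)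
    (hodd : ∀ k : ℕ, ∀ τ : ℝ, 0 < τ → |w (2*k+1) τ| ≤
      (K τ / 2) * ∫ r in (0:ℝ)..τ, Real.exp (2*νt*(r-τ)) * (1+r^2)⁻¹ * |w (2*k) r|)
    (heven : ∀ k : ℕ, ∀ τ : ℝ, 0 < τ → |w (2*k+2) τ| ≤
      (K τ / 2) * ∫ r in (0:ℝ)..τ, (1+r^2)⁻¹ * |w (2*k+1) r|) :
    ∀ n : ℕ, ∀ τ : ℝ, 0 < τ →
      |w n τ| ≤ (K τ)^n / (n.factorial : ℝ) * (τ/(1+τ))^n := by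
  have hK0 : ∀ τ, 0 ≤ K τ := fun τ => by
    rw [hK]
    positivity
  have hK_mono : ∀ r τ, 0 ≤ r → r ≤ τ → K r ≤ K τ := fun r τ hr hrτ => by
    rw [hK, hK]
    gcongr
  intro n
  induction n with
  | zero => simp [hw0]
  | succ n ih =>
    intro τ hτ
    have hwn : ∀ r ∈ Ioo 0 τ,
        (1 + r ^ 2)⁻¹ * |w n r| ≤ (1 + r ^ 2)⁻¹ * (K τ ^ n / n ! * (r / (1 + r)) ^ n) :=
      fun r hr => by
        have := hr.1
        refine mul_le_mul_of_nonneg_left ((ih r hr.1).trans ?_) (by positivity)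
        gcongr
        · exact hK0 r
        · exact hK_mono r τ hr.1.le hr.2.le
    obtain ⟨k, rfl | rfl⟩ := Nat.even_or_odd' n
    · refine le_pow_div_factorial_succ (2 * k) (hK0 τ) hτ.le (fun r hr => ?_) (hodd k τ hτ)
      have hexp : Real.exp (2 * νt * (r - τ)) ≤ 1 :=
        Real.exp_le_one_iff.mpr (mul_nonpos_of_nonneg_of_nonpos (by linarith) (by linarith [hr.2]))
      calc Real.exp (2 * νt * (r - τ)) * (1 + r ^ 2)⁻¹ * |w (2 * k) r|
          ≤ 1 * (1 + r ^ 2)⁻¹ * |w (2 * k) r| := by gcongr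
        _ ≤ _ := by simpa using hwn r hr
    · exact le_pow_div_factorial_succ (2 * k + 1) (hK0 τ) hτ.le hwn (heven k τ hτ)

theorem stmt7 (E ν νt : ℝ) (hE : 0 < E) (hν : 0 < ν) (hνt : 1/2 ≤ νt)
    (K : ℝ → ℝ) (hK : ∀ τ, K τ = 1 + 3*ν^2*τ^2/E^3)
    (w : ℕ → ℝ → ℝ)
    (hw0 : ∀ τ : ℝ, w 0 τ = 1)
    (hodd : ∀ k : ℕ, ∀ τ : ℝ, 0 < τ → |w (2*k+1) τ| ≤
      (K τ / 2) * ∫ r in (0:ℝ)..τ, Real.exp (2*νt*(r-τ)) * (1+r^2)⁻¹ * |w (2*k) r|)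
    (heven : ∀ k : ℕ, ∀ τ : ℝ, 0 < τ → |w (2*k+2) τ| ≤
      (K τ / 2) * ∫ r in (0:ℝ)..τ, (1+r^2)⁻¹ * |w (2*k+1) r|) :
    ∀ n : ℕ, ∀ τ : ℝ, 0 < τ →
      |w n τ| ≤ (K τ)^n / (n.factorial : ℝ) * (τ/(1+τ))^n :=
  stmt7_general E ν νt hE hνt K hK w hw0 hodd heven
end

section
/- Let γ ∈ ℂ and h > 0. The two functions p = h^{1/2 - i|γ|²/(2h)} Γ(1 - i|γ|²/(2h)) e^{π|γ|²/(4h)}/(iγ√π) and q = h^{1/2 - i|γ|²/(2h)} Γ(1 - i|γ|²/(2h)) e^{-π|γ|²/(4h)}/(iγ√π) satisfy |p|² - |q|² = 1. -/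
/-!
With `t = |γ|²/(2h)`, both `p` and `q` are `h^{1/2 - it} Γ(1 - it) / (iγ√π)` times `e^{±πt/2}`, so
`‖p‖² - ‖q‖² = h ‖Γ(1 - it)‖² · 2 sinh(πt) / (π|γ|²)`. Since `Γ(1 + it) = conj Γ(1 - it) = it Γ(it)`,
the reflection formula gives `‖Γ(1 - it)‖² = πt / sinh(πt)`, and everything cancels because `2ht = |γ|²`.
-/

open Complex ComplexConjugate

lemma Complex.norm_ofReal_cpow_sq_of_re_eq_half {x : ℝ} (hx : 0 < x) {s : ℂ} (hs : s.re = 1 / 2) :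
    ‖(x : ℂ) ^ s‖ ^ 2 = x := by
  rw [norm_cpow_eq_rpow_re_of_pos hx, hs, ← Real.sqrt_eq_rpow, Real.sq_sqrt hx.le]

lemma Complex.norm_Gamma_one_sub_I_mul_sq {t : ℝ} (ht : t ≠ 0) :
    ‖Gamma (1 - I * t)‖ ^ 2 = Real.pi * t / Real.sinh (Real.pi * t) := by
  have hIt : I * t ≠ 0 := mul_ne_zero I_ne_zero (ofReal_ne_zero.mpr ht)
  have hconj : conj (Gamma (1 - I * t)) = I * t * Gamma (I * t) := by
    rw [← Gamma_conj, ← Gamma_add_one _ hIt]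
    congr 1
    simp [Complex.ext_iff]
  have hsin : sin (Real.pi * (I * t)) = Real.sinh (Real.pi * t) * I := by
    rw [show (Real.pi : ℂ) * (I * t) = ((Real.pi * t : ℝ) : ℂ) * I by push_cast; ring,
      sin_mul_I, ofReal_sinh]
  have hsinh : Real.sinh (Real.pi * t) ≠ 0 := by
    simpa [Real.sinh_eq_zero] using mul_ne_zero Real.pi_ne_zero ht
  apply ofReal_injective
  rw [ofReal_pow, ← mul_conj', hconj]
  calc Gamma (1 - I * t) * (I * t * Gamma (I * t))
      = I * t * (Gamma (I * t) * Gamma (1 - I * t)) := by ring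
    _ = _ := by
      rw [Gamma_mul_Gamma_one_sub, hsin]
      push_cast
      field_simp

lemma Complex.norm_mul_exp_div_sq_sub (B D : ℂ) (a : ℝ) :
    ‖B * exp (a : ℝ) / D‖ ^ 2 - ‖B * exp ((-a : ℝ)) / D‖ ^ 2
      = ‖B‖ ^ 2 * (2 * Real.sinh (2 * a)) / ‖D‖ ^ 2 := by
  simp only [norm_div, norm_mul, norm_exp_ofReal, div_pow, mul_pow, Real.sinh_eq,
    ← Real.exp_nat_mul]
  ring_nf

theorem stmt12 (γ : ℂ) (hγ : γ ≠ 0) (h : ℝ) (hh : 0 < h) (p q : ℂ)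
    (hp : p = (h:ℂ) ^ ((1:ℂ)/2 - Complex.I * (‖γ‖)^2 / (2*h)) *
      Complex.Gamma (1 - Complex.I * (‖γ‖)^2 / (2*h)) *
      Complex.exp ((Real.pi * (‖γ‖)^2 / (4*h) : ℝ)) /
      (Complex.I * γ * Real.sqrt Real.pi))
    (hq : q = (h:ℂ) ^ ((1:ℂ)/2 - Complex.I * (‖γ‖)^2 / (2*h)) *
      Complex.Gamma (1 - Complex.I * (‖γ‖)^2 / (2*h)) *
      Complex.exp ((-(Real.pi * (‖γ‖)^2 / (4*h)) : ℝ)) /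
      (Complex.I * γ * Real.sqrt Real.pi)) :
    ‖p‖ ^ 2 - ‖q‖ ^ 2 = 1 := by
  set t : ℝ := ‖γ‖ ^ 2 / (2 * h) with ht
  have ht0 : t ≠ 0 := by positivity
  have harg : I * (‖γ‖ : ℂ) ^ 2 / (2 * h) = I * t := by rw [ht]; push_cast; ring
  have hcpow : ‖(h : ℂ) ^ ((1 : ℂ) / 2 - I * t)‖ ^ 2 = h :=
    norm_ofReal_cpow_sq_of_re_eq_half hh (by simp)
  have hden : ‖I * γ * Real.sqrt Real.pi‖ ^ 2 = ‖γ‖ ^ 2 * Real.pi := by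
    simp [mul_pow, Real.pi_nonneg]
  have hsinh : Real.sinh (Real.pi * t) ≠ 0 := by
    simpa [Real.sinh_eq_zero] using mul_ne_zero Real.pi_ne_zero ht0
  rw [hp, hq, norm_mul_exp_div_sq_sub, harg, norm_mul, mul_pow, hcpow,
    norm_Gamma_one_sub_I_mul_sq ht0, hden,
    show 2 * (Real.pi * ‖γ‖ ^ 2 / (4 * h)) = Real.pi * t by rw [ht]; ring]
  rw [ht] at hsinh ⊢
  field_simp
end
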